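/- arXiv:1312.6856 — 3 statements merged into one kernel-verified Lean document; each statement's English description precedes it below -/
import Mathlib

section
/- Let n ≥ 1 and consider an arrangement of 3n distinct lines in the complex projective plane such that each line of the arrangement intersects the other lines in exactly n+1 points. If there exists a point through which at least 2n lines of the arrangement pass, then n = 1 (i.e., the arrangement consists of three lines in general position). -/
open Module

lemma aux_inf (ℓ ℓ' : Submodule ℂ (Fin 3 → ℂ)) (hne : ℓ ≠ ℓ')
    (h2 : finrank ℂ ℓ = 2) (h2' : finrank ℂ ℓ' = 2) :
    finrank ℂ ↥(ℓ ⊓ ℓ') = 1 := by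
  have hsum := Submodule.finrank_sup_add_finrank_inf_eq ℓ ℓ'
  have hle : finrank ℂ ↥(ℓ ⊔ ℓ') ≤ 3 := by
    have h := Submodule.finrank_le (ℓ ⊔ ℓ')
    simpa using h
  have hlt : ℓ < ℓ ⊔ ℓ' := by
    refine lt_of_le_of_ne le_sup_left ?_
    intro h
    have h' : ℓ' ≤ ℓ := h ▸ le_sup_right
    exact hne (Submodule.eq_of_le_of_finrank_le h' (by omega)).symm
  have h3 : finrank ℂ ℓ < finrank ℂ ↥(ℓ ⊔ ℓ') :=
    Submodule.finrank_lt_finrank_of_lt hlt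
  omega

/-- An arrangement of `3n` distinct lines in `ℂP²` (lines = 2-dimensional
ℂ-subspaces of `ℂ³`, points = 1-dimensional subspaces) such that each line
meets the others in exactly `n+1` points. If some point lies on at least `2n`
lines of the arrangement, then `n = 1`. -/
theorem stmt0 (n : ℕ) (hn : 1 ≤ n)
    (L : Finset (Submodule ℂ (Fin 3 → ℂ)))
    (hlines : ∀ ℓ ∈ L, finrank ℂ ℓ = 2)
    (hcard : L.card = 3 * n)
    (hpts : ∀ ℓ ∈ L,
      {x : Submodule ℂ (Fin 3 → ℂ) | finrank ℂ x = 1 ∧ x ≤ ℓ ∧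
        ∃ ℓ' ∈ L, ℓ' ≠ ℓ ∧ x ≤ ℓ'}.ncard = n + 1)
    (hconc : ∃ x : Submodule ℂ (Fin 3 → ℂ), finrank ℂ x = 1 ∧
      2 * n ≤ {ℓ : Submodule ℂ (Fin 3 → ℂ) | ℓ ∈ L ∧ x ≤ ℓ}.ncard) :
    n = 1 := by
  obtain ⟨x, hx1, hx2⟩ := hconc
  have hPfin : ({ℓ : Submodule ℂ (Fin 3 → ℂ) | ℓ ∈ L ∧ x ≤ ℓ}).Finite :=
    L.finite_toSet.subset (fun ℓ h => h.1)
  have hL2 : 2 ≤ L.card := by omega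
  -- Step 1: there is a line of L not containing x.
  have hex : ∃ ℓ ∈ L, ¬ x ≤ ℓ := by
    by_contra h
    push_neg at h
    obtain ⟨ℓ, hℓL⟩ := Finset.card_pos.mp (by omega : 0 < L.card)
    have hset : {p : Submodule ℂ (Fin 3 → ℂ) | finrank ℂ p = 1 ∧ p ≤ ℓ ∧
        ∃ ℓ' ∈ L, ℓ' ≠ ℓ ∧ p ≤ ℓ'} = {x} := by
      ext p
      constructor
      · rintro ⟨hp1, hpℓ, ℓ', hℓ'L, hne, hpℓ'⟩
        have hinf : finrank ℂ ↥(ℓ ⊓ ℓ') = 1 :=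
          aux_inf _ _ (Ne.symm hne) (hlines ℓ hℓL) (hlines ℓ' hℓ'L)
        have hp : p = ℓ ⊓ ℓ' :=
          Submodule.eq_of_le_of_finrank_le (le_inf hpℓ hpℓ') (by omega)
        have hxeq : x = ℓ ⊓ ℓ' :=
          Submodule.eq_of_le_of_finrank_le (le_inf (h ℓ hℓL) (h ℓ' hℓ'L)) (by omega)
        simp [hp, hxeq]
      · rintro rfl
        obtain ⟨ℓ', hℓ'L, hne⟩ := Finset.exists_mem_ne (show (1:ℕ) < L.card from by omega) ℓ
        exact ⟨hx1, h ℓ hℓL, ℓ', hℓ'L, hne, h ℓ' hℓ'L⟩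
    have hone := hpts ℓ hℓL
    rw [hset, Set.ncard_singleton] at hone
    omega
  obtain ⟨ℓ, hℓL, hxℓ⟩ := hex
  have hSfin : ({p : Submodule ℂ (Fin 3 → ℂ) | finrank ℂ p = 1 ∧ p ≤ ℓ ∧
      ∃ ℓ' ∈ L, ℓ' ≠ ℓ ∧ p ≤ ℓ'}).Finite := by
    apply Set.finite_of_ncard_ne_zero
    rw [hpts ℓ hℓL]; omega
  -- the map sending a line through x to its intersection with ℓ
  have hmaps : Set.MapsTo (fun ℓ' => ℓ' ⊓ ℓ)
      {ℓ' : Submodule ℂ (Fin 3 → ℂ) | ℓ' ∈ L ∧ x ≤ ℓ'}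
      {p : Submodule ℂ (Fin 3 → ℂ) | finrank ℂ p = 1 ∧ p ≤ ℓ ∧
        ∃ ℓ' ∈ L, ℓ' ≠ ℓ ∧ p ≤ ℓ'} := by
    rintro ℓ' ⟨hℓ'L, hxℓ'⟩
    have hne : ℓ' ≠ ℓ := fun h => hxℓ (h ▸ hxℓ')
    exact ⟨aux_inf _ _ hne (hlines _ hℓ'L) (hlines _ hℓL), inf_le_right,
      ℓ', hℓ'L, hne, inf_le_left⟩
  have hinj : Set.InjOn (fun ℓ' => ℓ' ⊓ ℓ)
      {ℓ' : Submodule ℂ (Fin 3 → ℂ) | ℓ' ∈ L ∧ x ≤ ℓ'} := by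
    rintro ℓ₁ ⟨h1L, hx1'⟩ ℓ₂ ⟨h2L, hx2'⟩ heq
    simp only at heq
    have key : ∀ ℓ₀ ∈ L, x ≤ ℓ₀ → ℓ₀ ≠ ℓ → x ⊔ (ℓ₀ ⊓ ℓ) = ℓ₀ := by
      intro ℓ₀ hℓ₀L hxℓ₀ hne
      have hy1 : finrank ℂ ↥(ℓ₀ ⊓ ℓ) = 1 :=
        aux_inf _ _ hne (hlines _ hℓ₀L) (hlines _ hℓL)
      have hbot : x ⊓ (ℓ₀ ⊓ ℓ) = ⊥ := by
        by_contra hb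
        have hpos : finrank ℂ ↥(x ⊓ (ℓ₀ ⊓ ℓ)) ≠ 0 := by
          rwa [ne_eq, Submodule.finrank_eq_zero]
        have hle1 : finrank ℂ ↥(x ⊓ (ℓ₀ ⊓ ℓ)) ≤ finrank ℂ x :=
          Submodule.finrank_mono inf_le_left
        have hxeq : x ⊓ (ℓ₀ ⊓ ℓ) = x :=
          Submodule.eq_of_le_of_finrank_le inf_le_left (by omega)
        exact hxℓ (hxeq ▸ (le_trans inf_le_right inf_le_right))
      have hsum := Submodule.finrank_sup_add_finrank_inf_eq x (ℓ₀ ⊓ ℓ)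
      rw [hbot] at hsum
      simp only [finrank_bot] at hsum
      refine Submodule.eq_of_le_of_finrank_le (sup_le hxℓ₀ inf_le_left) ?_
      rw [hlines _ hℓ₀L]; omega
    have hne1 : ℓ₁ ≠ ℓ := fun h => hxℓ (h ▸ hx1')
    have hne2 : ℓ₂ ≠ ℓ := fun h => hxℓ (h ▸ hx2')
    calc ℓ₁ = x ⊔ (ℓ₁ ⊓ ℓ) := (key ℓ₁ h1L hx1' hne1).symm
      _ = x ⊔ (ℓ₂ ⊓ ℓ) := by rw [heq]
      _ = ℓ₂ := key ℓ₂ h2L hx2' hne2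
  have hle := Set.ncard_le_ncard_of_injOn _ hmaps hinj hSfin
  rw [hpts ℓ hℓL] at hle
  omega
end

section
/- Let x, y, z be three points on the unit sphere S² ⊂ ℝ³ such that d(x,y) + d(y,z) + d(z,x) = 2π, where d denotes the intrinsic (angular) distance. Then x, y, z lie on a common great circle, i.e., there is a 2-dimensional linear subspace of ℝ³ containing all three points. -/
/-!
If `angle x y + angle y z + angle z x = 2π`, then replacing `y` by its antipode `-y` turns
`angle x y` and `angle y z` into their supplements, so `angle x z = angle x (-y) + angle (-y) z`:
the triangle inequality for angles is an equality. By its equality case either `z = r • x`, or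
`-y` is a nonnegative combination of `x` and `z`. Either way `x, y, z` span a subspace of
dimension at most 2, and in `ℝ³` such a subspace lies in the orthogonal complement of a nonzero
normal vector.
-/

open Module Submodule InnerProductGeometry
open scoped NNReal

theorem Submodule.exists_finrank_add_one_eq_of_ne_top {𝕜 E : Type*} [RCLike 𝕜]
    [NormedAddCommGroup E] [InnerProductSpace 𝕜 E] [FiniteDimensional 𝕜 E]
    {K : Submodule 𝕜 E} (hK : K ≠ ⊤) :
    ∃ H : Submodule 𝕜 E, finrank 𝕜 H + 1 = finrank 𝕜 E ∧ K ≤ H := by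
  obtain ⟨w, hwK, hw0⟩ := exists_mem_ne_zero_of_ne_bot (mt orthogonal_eq_bot_iff.1 hK)
  refine ⟨(𝕜 ∙ w)ᗮ, ?_, ?_⟩
  · rw [← (𝕜 ∙ w).finrank_add_finrank_orthogonal, finrank_span_singleton hw0, add_comm]
  · exact K.le_orthogonal_orthogonal.trans (orthogonal_le ((span_singleton_le_iff_mem _ _).2 hwK))

theorem Submodule.finrank_span_triple_le_two {K V : Type*} [DivisionRing K] [AddCommGroup V]
    [Module K V] {x y z : V} (hz : z ∈ span K {x, y}) :
    finrank K (span K {x, y, z}) ≤ 2 := by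
  classical
  have hle : span K {x, y, z} ≤ span K {x, y} := by
    rw [span_le, Set.insert_subset_iff, Set.insert_subset_iff, Set.singleton_subset_iff]
    exact ⟨subset_span (by simp), subset_span (by simp), hz⟩
  have : FiniteDimensional K (span K {x, y}) := .span_of_finite K (Set.toFinite _)
  calc finrank K (span K {x, y, z}) ≤ finrank K (span K {x, y}) := finrank_mono hle
    _ ≤ 2 := (finrank_span_le_card _).trans (by simpa using Finset.card_le_two)

namespace InnerProductGeometry

variable {V : Type*} [NormedAddCommGroup V] [InnerProductSpace ℝ V]

theorem angle_eq_arccos_inner_of_norm_eq_one {x y : V} (hx : ‖x‖ = 1) (hy : ‖y‖ = 1) :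
    angle x y = Real.arccos (inner ℝ x y) := by
  simp [angle, hx, hy]

theorem mem_span_pair_or_mem_span_pair_of_angle_add_angle_add_angle_eq_two_pi {x y z : V}
    (h : angle x y + angle y z + angle z x = 2 * Real.pi) :
    z ∈ span ℝ {x, y} ∨ y ∈ span ℝ {x, z} := by
  rcases eq_or_ne y 0 with rfl | hy
  · exact Or.inr (zero_mem _)
  have hsum : angle x z = angle x (-y) + angle (-y) z := by
    rw [angle_neg_right, angle_neg_left, angle_comm x z]
    linarith
  rcases (angle_eq_angle_add_angle_iff (neg_ne_zero.2 hy)).1 hsum with hπ | hmem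
  · obtain ⟨-, r, -, rfl⟩ := angle_eq_pi_iff.1 hπ
    exact Or.inl (smul_mem _ _ (subset_span (by simp)))
  · exact Or.inr (neg_mem_iff.1 (span_le_restrictScalars ℝ≥0 ℝ _ hmem))

theorem finrank_span_le_two_of_angle_add_angle_add_angle_eq_two_pi {x y z : V}
    (h : angle x y + angle y z + angle z x = 2 * Real.pi) :
    finrank ℝ (span ℝ {x, y, z}) ≤ 2 := by
  rcases mem_span_pair_or_mem_span_pair_of_angle_add_angle_add_angle_eq_two_pi h with hz | hy
  · exact finrank_span_triple_le_two hz
  · rw [Set.pair_comm y z]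
    exact finrank_span_triple_le_two hy

end InnerProductGeometry

/-- If three points of the unit sphere `S² ⊂ ℝ³` span a triangle of intrinsic
perimeter `2π`, then they lie on a common great circle. -/
theorem stmt2 (x y z : EuclideanSpace ℝ (Fin 3))
    (hx : ‖x‖ = 1) (hy : ‖y‖ = 1) (hz : ‖z‖ = 1)
    (h : Real.arccos (inner ℝ x y : ℝ) + Real.arccos (inner ℝ y z : ℝ) +
      Real.arccos (inner ℝ z x : ℝ) = 2 * Real.pi) :
    ∃ S : Submodule ℝ (EuclideanSpace ℝ (Fin 3)),
      finrank ℝ S = 2 ∧ x ∈ S ∧ y ∈ S ∧ z ∈ S := by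
  rw [← angle_eq_arccos_inner_of_norm_eq_one hx hy,
    ← angle_eq_arccos_inner_of_norm_eq_one hy hz,
    ← angle_eq_arccos_inner_of_norm_eq_one hz hx] at h
  have hrank := finrank_span_le_two_of_angle_add_angle_add_angle_eq_two_pi h
  have hK : span ℝ {x, y, z} ≠ ⊤ := fun htop => by
    rw [htop, finrank_top, finrank_euclideanSpace_fin] at hrank
    omega
  obtain ⟨S, hS, hKS⟩ := exists_finrank_add_one_eq_of_ne_top hK
  rw [finrank_euclideanSpace_fin] at hS
  exact ⟨S, by omega, hKS (subset_span (by simp)), hKS (subset_span (by simp)),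
    hKS (subset_span (by simp))⟩
end

section
/- Let γ : [0, L] → S² be a closed rectifiable curve on the unit sphere with length L < 2π. Then γ is contained in some open hemisphere; i.e., there exists a unit vector w ∈ ℝ³ with ⟨γ(t), w⟩ > 0 for all t. -/
/-!
Bisect the curve by length at `t₀` (the length of `γ` on `[0, t]` is continuous in `t`), giving
two arcs of length `< π`, from `p = γ 0` to `q = γ t₀` and back.
If a point `x` of the curve lay on the great circle `⟪x, p + q⟫ = 0`, then
`angle p x + angle x q = π`; but along each arc the broken angle from its start through `x` to its
end is bounded by the arc length, since the angle metric satisfies the triangle inequality and is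
locally `angle ≤ chord + chord³`. So the curve misses that great circle, and by connectedness it
stays in the open hemisphere around `p + q`, which contains `p`.
-/

open Real Set Filter Topology InnerProductGeometry
open scoped RealInnerProductSpace

theorem eVariationOn_Icc_add_Icc {α E : Type*} [LinearOrder α] [PseudoEMetricSpace E] (f : α → E)
    {a b c : α} (hab : a ≤ b) (hbc : b ≤ c) :
    eVariationOn f (Icc a b) + eVariationOn f (Icc b c) = eVariationOn f (Icc a c) := by
  simpa using eVariationOn.Icc_add_Icc f hab hbc (mem_univ b)

theorem LocallyBoundedVariationOn.continuousOn_variationOnFromTo {α E : Type*} [LinearOrder α]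
    [TopologicalSpace α] [OrderTopology α] [PseudoMetricSpace E] {f : α → E} {s : Set α}
    (hf : LocallyBoundedVariationOn f s) (hcont : ContinuousOn f s) {a : α} (ha : a ∈ s) :
    ContinuousOn (variationOnFromTo f s a) s := by
  intro b hb
  have hsplit : s \ {b} = s ∩ Iio b ∪ s ∩ Ioi b := by
    rw [← inter_union_distrib_left, Iio_union_Ioi, sdiff_eq_compl_inter, inter_comm]
  rw [← continuousWithinAt_sdiff_self, hsplit]
  refine ContinuousWithinAt.union ?_ ?_ <;> rw [ContinuousWithinAt]
  · simpa using variationOnFromTo.tendsto_left ha hb hf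
      ((hcont b hb).mono inter_subset_left)
  · simpa using variationOnFromTo.tendsto_right ha hb hf
      ((hcont b hb).mono inter_subset_left)

theorem exists_eVariationOn_Icc_eq_eVariationOn_Icc {E : Type*} [PseudoMetricSpace E]
    {f : ℝ → E} {a b : ℝ} (hab : a ≤ b) (hcont : ContinuousOn f (Icc a b))
    (hf : BoundedVariationOn f (Icc a b)) :
    ∃ c ∈ Icc a b, eVariationOn f (Icc a c) = eVariationOn f (Icc c b) := by
  set v := variationOnFromTo f (Icc a b)
  have ha : a ∈ Icc a b := left_mem_Icc.2 hab
  have hb : b ∈ Icc a b := right_mem_Icc.2 hab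
  have hv_nonneg : 0 ≤ v a b := variationOnFromTo.nonneg_of_le f _ hab
  obtain ⟨c, hc, hvc⟩ : v a b / 2 ∈ v a '' Icc a b := by
    refine intermediate_value_Icc hab
      (hf.locallyBoundedVariationOn.continuousOn_variationOnFromTo hcont ha) ?_
    rw [variationOnFromTo.self]
    constructor <;> linarith
  have hadd := variationOnFromTo.add hf.locallyBoundedVariationOn ha hc hb
  have hfin : ∀ {x y}, x ∈ Icc a b → y ∈ Icc a b → eVariationOn f (Icc x y) ≠ ⊤ := fun hx hy =>
    ne_top_of_le_ne_top hf (eVariationOn.mono f (Icc_subset_Icc hx.1 hy.2))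
  refine ⟨c, hc, (ENNReal.toReal_eq_toReal_iff' (hfin ha hc) (hfin hc hb)).1 ?_⟩
  rw [variationOnFromTo.eq_of_le _ _ hc.1, variationOnFromTo.eq_of_le _ _ hc.2,
    inter_eq_right.2 (Icc_subset_Icc le_rfl hc.2),
    inter_eq_right.2 (Icc_subset_Icc hc.1 le_rfl)] at hadd
  simp only [v, variationOnFromTo.eq_of_le _ _ hc.1,
    inter_eq_right.2 (Icc_subset_Icc le_rfl hc.2)] at hvc
  linarith

theorem le_two_mul_sin_half_add_pow_three {θ : ℝ} (h0 : 0 ≤ θ) (hπ : θ ≤ π) :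
    θ ≤ 2 * sin (θ / 2) + (2 * sin (θ / 2)) ^ 3 := by
  set c := 2 * sin (θ / 2)
  have htaylor : θ - θ ^ 3 / 24 ≤ c := by
    have := sin_ge_sub_cube (x := θ / 2) (by positivity)
    linarith
  -- Jordan's inequality `2x/π ≤ sin x` together with `π ≤ 4`
  have hjordan : θ ≤ 2 * c := by
    have h := mul_le_sin (x := θ / 2) (by positivity) (by linarith)
    rw [show 2 / π * (θ / 2) = θ / π by ring] at h
    have : θ / 4 ≤ θ / π := div_le_div_of_nonneg_left h0 pi_pos pi_le_four
    linarith
  have hcube : θ ^ 3 ≤ (2 * c) ^ 3 := pow_le_pow_left₀ h0 hjordan 3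
  nlinarith [pow_nonneg (show 0 ≤ c by linarith) 3]

variable {V : Type*} [NormedAddCommGroup V] [InnerProductSpace ℝ V]

theorem norm_sub_eq_two_mul_sin_angle_div_two {x y : V} (hx : ‖x‖ = 1) (hy : ‖y‖ = 1) :
    ‖x - y‖ = 2 * sin (angle x y / 2) := by
  have hlaw := norm_sub_sq_eq_norm_sq_add_norm_sq_sub_two_mul_norm_mul_norm_mul_cos_angle x y
  rw [hx, hy] at hlaw
  have hcos : cos (angle x y) = 1 - 2 * sin (angle x y / 2) ^ 2 := by
    have h2 := cos_two_mul (angle x y / 2)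
    rw [mul_div_cancel₀ _ two_ne_zero] at h2
    linarith [sin_sq_add_cos_sq (angle x y / 2)]
  have hsin : 0 ≤ sin (angle x y / 2) :=
    sin_nonneg_of_nonneg_of_le_pi (by linarith [angle_nonneg x y])
      (by linarith [angle_le_pi x y, pi_pos])
  nlinarith [norm_nonneg (x - y)]

theorem angle_le_norm_sub_add_norm_sub_pow_three {x y : V} (hx : ‖x‖ = 1) (hy : ‖y‖ = 1) :
    angle x y ≤ ‖x - y‖ + ‖x - y‖ ^ 3 := by
  rw [norm_sub_eq_two_mul_sin_angle_div_two hx hy]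
  exact le_two_mul_sin_half_add_pow_three (angle_nonneg x y) (angle_le_pi x y)

theorem angle_add_angle_eq_pi_of_inner_add_eq_zero {p q x : V} (hpq : ‖p‖ = ‖q‖)
    (hx : ⟪x, p + q⟫ = 0) : angle p x + angle x q = π := by
  have hq : ⟪x, q⟫ = -⟪x, p⟫ := by rw [inner_add_right] at hx; linarith
  rw [angle_comm p x, angle, angle, hq, ← hpq, neg_div, arccos_neg]
  ring

theorem ofReal_angle_le_mul_eVariationOn {γ : ℝ → V} {a b δ C : ℝ} (hab : a ≤ b) (hδ : 0 < δ)
    (hC : 0 ≤ C) (hloc : ∀ s ∈ Icc a b, ∀ t ∈ Icc a b, s ≤ t → t - s < δ →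
      angle (γ s) (γ t) ≤ C * dist (γ s) (γ t)) :
    ENNReal.ofReal (angle (γ a) (γ b)) ≤ ENNReal.ofReal C * eVariationOn γ (Icc a b) := by
  have hstep : ∀ n : ℕ, ∀ t ∈ Icc a b, t ≤ a + n * (δ / 2) →
      ENNReal.ofReal (angle (γ a) (γ t)) ≤ ENNReal.ofReal C * eVariationOn γ (Icc a t) := by
    intro n
    induction n with
    | zero =>
      intro t ht htn
      obtain rfl : t = a := le_antisymm (by simpa using htn) ht.1
      have := hloc t ht t ht le_rfl (by simpa using hδ)
      simp only [dist_self, mul_zero] at this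
      simp [le_antisymm this (angle_nonneg _ _)]
    | succ n ih =>
      intro t ht htn
      by_cases hle : t ≤ a + n * (δ / 2)
      · exact ih t ht hle
      set s := a + n * (δ / 2) with hs_def
      have hs : s ∈ Icc a b :=
        ⟨le_add_of_nonneg_right (by positivity), by linarith [ht.2]⟩
      have hst : s ≤ t := by linarith
      have hloc' := hloc s hs t ht hst (by push_cast at htn; linarith [hs_def])
      calc ENNReal.ofReal (angle (γ a) (γ t))
          ≤ ENNReal.ofReal (angle (γ a) (γ s)) + ENNReal.ofReal (angle (γ s) (γ t)) := by
            rw [← ENNReal.ofReal_add (angle_nonneg _ _) (angle_nonneg _ _)]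
            exact ENNReal.ofReal_le_ofReal (angle_le_angle_add_angle _ _ _)
        _ ≤ ENNReal.ofReal C * eVariationOn γ (Icc a s)
            + ENNReal.ofReal C * eVariationOn γ (Icc s t) := by
            gcongr
            · exact ih s hs le_rfl
            · calc ENNReal.ofReal (angle (γ s) (γ t)) ≤ ENNReal.ofReal (C * dist (γ s) (γ t)) :=
                    ENNReal.ofReal_le_ofReal hloc'
                _ = ENNReal.ofReal C * edist (γ s) (γ t) := by
                    rw [ENNReal.ofReal_mul hC, edist_dist]
                _ ≤ ENNReal.ofReal C * eVariationOn γ (Icc s t) := by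
                    gcongr
                    exact eVariationOn.edist_le γ (left_mem_Icc.2 hst) (right_mem_Icc.2 hst)
        _ = ENNReal.ofReal C * eVariationOn γ (Icc a t) := by
            rw [← mul_add, eVariationOn_Icc_add_Icc γ hs.1 hst]
  obtain ⟨n, hn⟩ := exists_nat_gt ((b - a) / (δ / 2))
  refine hstep n b (right_mem_Icc.2 hab) ?_
  rw [div_lt_iff₀ (by positivity)] at hn
  linarith

theorem ofReal_angle_le_eVariationOn {γ : ℝ → V} {a b : ℝ} (hab : a ≤ b)
    (hcont : ContinuousOn γ (Icc a b)) (hγ : ∀ t ∈ Icc a b, ‖γ t‖ = 1) :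
    ENNReal.ofReal (angle (γ a) (γ b)) ≤ eVariationOn γ (Icc a b) := by
  set W := eVariationOn γ (Icc a b)
  rcases eq_or_ne W ⊤ with hW | hW
  · simp [hW]
  have hbound : ∀ ε > 0, ENNReal.ofReal (angle (γ a) (γ b)) ≤ ENNReal.ofReal (1 + ε) * W := by
    intro ε hε
    obtain ⟨δ, hδ, hclose⟩ := Metric.uniformContinuousOn_iff.1
      (isCompact_Icc.uniformContinuousOn_of_continuous hcont) (√ε) (sqrt_pos.2 hε)
    refine ofReal_angle_le_mul_eVariationOn hab hδ (by positivity) fun s hs t ht hst hts => ?_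
    have hst' : dist s t < δ := by
      rwa [Real.dist_eq, abs_sub_comm, abs_of_nonneg (sub_nonneg.2 hst)]
    have hc : dist (γ s) (γ t) ^ 2 < ε := (lt_sqrt dist_nonneg).1 (hclose s hs t ht hst')
    have := angle_le_norm_sub_add_norm_sub_pow_three (hγ s hs) (hγ t ht)
    rw [← dist_eq_norm] at this
    nlinarith [dist_nonneg (x := γ s) (y := γ t)]
  have hlim : Tendsto (fun ε : ℝ => ENNReal.ofReal (1 + ε) * W) (𝓝[>] 0) (𝓝 W) := by
    have h1 : Tendsto (fun ε : ℝ => 1 + ε) (𝓝[>] 0) (𝓝 1) := by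
      have : Tendsto (fun ε : ℝ => 1 + ε) (𝓝 0) (𝓝 (1 + 0)) :=
        tendsto_const_nhds.add tendsto_id
      simpa using this.mono_left nhdsWithin_le_nhds
    simpa using ENNReal.Tendsto.mul_const (ENNReal.tendsto_ofReal h1) (Or.inr hW)
  exact ge_of_tendsto hlim (eventually_nhdsWithin_of_forall hbound)

theorem ofReal_angle_add_angle_le_eVariationOn {γ : ℝ → V} {a s b : ℝ} (has : a ≤ s)
    (hsb : s ≤ b) (hcont : ContinuousOn γ (Icc a b)) (hγ : ∀ t ∈ Icc a b, ‖γ t‖ = 1) :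
    ENNReal.ofReal (angle (γ a) (γ s) + angle (γ s) (γ b)) ≤ eVariationOn γ (Icc a b) := by
  rw [ENNReal.ofReal_add (angle_nonneg _ _) (angle_nonneg _ _),
    ← eVariationOn_Icc_add_Icc γ has hsb]
  exact add_le_add
    (ofReal_angle_le_eVariationOn has (hcont.mono (Icc_subset_Icc le_rfl hsb))
      fun t ht => hγ t ⟨ht.1, ht.2.trans hsb⟩)
    (ofReal_angle_le_eVariationOn hsb (hcont.mono (Icc_subset_Icc has le_rfl))
      fun t ht => hγ t ⟨has.trans ht.1, ht.2⟩)

theorem inner_add_ne_zero_of_eVariationOn_lt_pi {γ : ℝ → V} {a b : ℝ}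
    (hcont : ContinuousOn γ (Icc a b)) (hγ : ∀ t ∈ Icc a b, ‖γ t‖ = 1)
    (hlen : eVariationOn γ (Icc a b) < ENNReal.ofReal π) {t : ℝ} (ht : t ∈ Icc a b) :
    ⟪γ t, γ a + γ b⟫ ≠ 0 := by
  intro h
  have hab := ht.1.trans ht.2
  have hpi := angle_add_angle_eq_pi_of_inner_add_eq_zero
    ((hγ a (left_mem_Icc.2 hab)).trans (hγ b (right_mem_Icc.2 hab)).symm) h
  have := ofReal_angle_add_angle_le_eVariationOn ht.1 ht.2 hcont hγ
  rw [hpi] at this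
  exact this.not_gt hlen

theorem exists_forall_inner_pos_of_inner_add_ne_zero {γ : ℝ → V} {S : Set ℝ}
    (hS : IsPreconnected S) (hcont : ContinuousOn γ S) {a c : ℝ} (ha : a ∈ S)
    (hγa : ‖γ a‖ = 1) (hγc : ‖γ c‖ = 1) (hsep : ∀ t ∈ S, ⟪γ t, γ a + γ c⟫ ≠ 0) :
    ∃ w : V, ‖w‖ = 1 ∧ ∀ t ∈ S, 0 < ⟪γ t, w⟫ := by
  set v := γ a + γ c
  have hva : 0 < ⟪γ a, v⟫ := by
    have := neg_le_of_abs_le ((abs_real_inner_le_norm (γ a) (γ c)).trans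
      (by rw [hγa, hγc, one_mul]))
    refine lt_of_le_of_ne ?_ (hsep a ha).symm
    rw [inner_add_right, real_inner_self_eq_norm_sq, hγa]
    linarith
  have hpos : ∀ t ∈ S, 0 < ⟪γ t, v⟫ := by
    intro t ht
    by_contra! hneg
    obtain ⟨s, hs, hs0⟩ :=
      hS.intermediate_value ht ha (hcont.inner continuousOn_const) ⟨hneg, hva.le⟩
    exact hsep s hs hs0
  have hv : v ≠ 0 := fun h => hva.ne' (by rw [h, inner_zero_right])
  refine ⟨‖v‖⁻¹ • v, norm_smul_inv_norm hv, fun t ht => ?_⟩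
  rw [real_inner_smul_right]
  exact mul_pos (inv_pos.2 (norm_pos_iff.2 hv)) (hpos t ht)

/-- A closed rectifiable curve on the unit sphere `S² ⊂ ℝ³` of length `< 2π`
is contained in an open hemisphere. -/
theorem stmt7 (L : ℝ) (hL : 0 < L) (γ : ℝ → EuclideanSpace ℝ (Fin 3))
    (hcont : ContinuousOn γ (Set.Icc 0 L))
    (hsph : ∀ t ∈ Set.Icc 0 L, ‖γ t‖ = 1)
    (hclosed : γ 0 = γ L)
    (hlen : eVariationOn γ (Set.Icc 0 L) < ENNReal.ofReal (2 * Real.pi)) :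
    ∃ w : EuclideanSpace ℝ (Fin 3), ‖w‖ = 1 ∧
      ∀ t ∈ Set.Icc 0 L, 0 < (inner ℝ (γ t) w : ℝ) := by
  obtain ⟨t₀, ht₀, hhalf⟩ :=
    exists_eVariationOn_Icc_eq_eVariationOn_Icc hL.le hcont hlen.ne_top
  have hhalf_lt : eVariationOn γ (Icc 0 t₀) < ENNReal.ofReal π := by
    refine lt_of_not_ge fun h => hlen.not_ge ?_
    rw [← eVariationOn_Icc_add_Icc γ ht₀.1 ht₀.2, ← hhalf, two_mul,
      ENNReal.ofReal_add pi_nonneg pi_nonneg]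
    exact add_le_add h h
  have h0 : (0 : ℝ) ∈ Icc 0 L := left_mem_Icc.2 hL.le
  refine exists_forall_inner_pos_of_inner_add_ne_zero isPreconnected_Icc hcont h0
    (hsph 0 h0) (hsph t₀ ht₀) fun t ht => ?_
  rcases le_total t t₀ with htt₀ | htt₀
  · exact inner_add_ne_zero_of_eVariationOn_lt_pi
      (hcont.mono (Icc_subset_Icc le_rfl ht₀.2)) (fun s hs => hsph s ⟨hs.1, hs.2.trans ht₀.2⟩)
      hhalf_lt ⟨ht.1, htt₀⟩
  · rw [add_comm, hclosed]
    exact inner_add_ne_zero_of_eVariationOn_lt_pi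
      (hcont.mono (Icc_subset_Icc ht₀.1 le_rfl)) (fun s hs => hsph s ⟨ht₀.1.trans hs.1, hs.2⟩)
      (hhalf ▸ hhalf_lt) ⟨htt₀, ht.2⟩
end
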